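/- Let ℓ be a Laurent polynomial in d variables with positive integer coefficients whose Newton polytope does not contain the origin. Then the infimum of ℓ over the open positive orthant is 0: for every ε > 0 there exists p ∈ (ℝ_{>0})^d with ℓ(p) < ε. -/

import Mathlib

/-!
A linear functional `f` separating the origin from the Newton polytope is positive on the
support. Along the curve `p i = exp (-t * f (Pi.single i 1))` the monomial with exponent `m`
equals `exp (-t * f m)`, so as `t → ∞` every term, hence the whole sum, tends to `0`.
-/

open Filter Topology Real

theorem exists_strongDual_pos_of_zero_notMem_convexHull {E : Type*} [TopologicalSpace E]
    [AddCommGroup E] [IsTopologicalAddGroup E] [Module ℝ E] [ContinuousSMul ℝ E]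
    [LocallyConvexSpace ℝ E] [T2Space E] {s : Set E} (hs : s.Finite)
    (h0 : (0 : E) ∉ convexHull ℝ s) : ∃ f : StrongDual ℝ E, ∀ x ∈ s, 0 < f x := by
  obtain ⟨f, u, hf0, hfu⟩ :=
    geometric_hahn_banach_point_closed (convex_convexHull ℝ s) (hs.isClosed_convexHull ℝ) h0
  rw [map_zero] at hf0
  exact ⟨f, fun x hx => hf0.trans (hfu x (subset_convexHull ℝ s hx))⟩

theorem tendsto_sum_mul_exp_neg_mul_atTop {ι : Type*} (s : Finset ι) (a b : ι → ℝ)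
    (hb : ∀ i ∈ s, 0 < b i) :
    Tendsto (fun t => ∑ i ∈ s, a i * exp (-(t * b i))) atTop (𝓝 0) := by
  simpa using tendsto_finsetSum s fun i hi =>
    (tendsto_exp_neg_atTop_nhds_zero.comp (tendsto_id.atTop_mul_const (hb i hi))).const_mul (a i)

theorem prod_exp_zpow {ι : Type*} [Fintype ι] (w : ι → ℝ) (m : ι → ℤ) :
    ∏ i, exp (w i) ^ m i = exp (∑ i, m i * w i) := by
  rw [exp_sum]
  congr with i
  rw [← rpow_intCast, ← exp_mul, mul_comm]

theorem prod_exp_neg_mul_apply_single_zpow {ι F : Type*} [Fintype ι] [DecidableEq ι]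
    [FunLike F (ι → ℝ) ℝ] [LinearMapClass F ℝ (ι → ℝ) ℝ] (f : F) (t : ℝ) (m : ι → ℤ) :
    ∏ i, exp (-(t * f (Pi.single i 1))) ^ m i = exp (-(t * f fun i => (m i : ℝ))) := by
  have hf : f (fun i => (m i : ℝ)) = ∑ i, (m i : ℝ) * f (Pi.single i 1) := by
    conv_lhs => rw [pi_eq_sum_univ' fun i => (m i : ℝ)]
    simp [map_sum, map_smul]
  rw [prod_exp_zpow, hf, Finset.mul_sum, ← Finset.sum_neg_distrib]
  congr 1
  exact Finset.sum_congr rfl fun i _ => by ring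

theorem laurent_inf_zero_of_newton_polytope_not_mem_zero_general
    (d : ℕ) (c : (Fin d → ℤ) →₀ ℤ)
    (hnp : (0 : Fin d → ℝ) ∉
      convexHull ℝ ((fun m : Fin d → ℤ => fun i => (m i : ℝ)) ''
        (c.support : Set (Fin d → ℤ)))) :
    ∀ ε : ℝ, 0 < ε → ∃ p : Fin d → ℝ, (∀ i, 0 < p i) ∧
      ∑ m ∈ c.support, (c m : ℝ) * ∏ i, p i ^ (m i) < ε := by
  intro ε hε
  obtain ⟨f, hf⟩ :=
    exists_strongDual_pos_of_zero_notMem_convexHull (c.support.finite_toSet.image _) hnp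
  obtain ⟨t, ht⟩ := ((tendsto_sum_mul_exp_neg_mul_atTop c.support (fun m => (c m : ℝ))
    (fun m => f fun i => (m i : ℝ)) fun m hm => hf _ ⟨m, hm, rfl⟩).eventually
      (gt_mem_nhds hε)).exists
  refine ⟨fun i => exp (-(t * f (Pi.single i 1))), fun _ => exp_pos _, ?_⟩
  simpa only [prod_exp_neg_mul_apply_single_zpow] using ht

/-- If the Newton polytope of a Laurent polynomial with positive integer
coefficients does not contain the origin, then the infimum of its values over
the open positive orthant is `0`: for every `ε > 0` there is a point of the
open positive orthant where the value is `< ε`. -/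
theorem laurent_inf_zero_of_newton_polytope_not_mem_zero
    (d : ℕ) (c : (Fin d → ℤ) →₀ ℤ) (hc : c ≠ 0)
    (hpos : ∀ m ∈ c.support, 1 ≤ c m)
    (hnp : (0 : Fin d → ℝ) ∉
      convexHull ℝ ((fun m : Fin d → ℤ => fun i => (m i : ℝ)) ''
        (c.support : Set (Fin d → ℤ)))) :
    ∀ ε : ℝ, 0 < ε → ∃ p : Fin d → ℝ, (∀ i, 0 < p i) ∧
      ∑ m ∈ c.support, (c m : ℝ) * ∏ i, p i ^ (m i) < ε :=
  laurent_inf_zero_of_newton_polytope_not_mem_zero_general d c hnp
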